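/- Let n ≥ 1 and let G_0, …, G_{n−1} ∈ M_n(ℂ) satisfy: (1) G_{n−1} = c·E_{n−1,n−1} for some c ≠ 0; (2) for every p ∈ {0,…,n−2}, (G_p)_{n−1,p} ≠ 0; (3) for every p ∈ {1,…,n−2} and every k < p, (G_p)_{n−1,k} = 0. Then the star-subalgebra of M_n(ℂ) (with conjugate-transpose as star) generated over ℂ by {G_0, …, G_{n−1}} is all of M_n(ℂ). -/

import Mathlib

/-!
`c⁻¹ G_{n-1} = E_{n-1,n-1}` lies in the algebra, hence so do the last rows
`E_{n-1,n-1} G_p = ∑_k (G_p)_{n-1,k} E_{n-1,k}`. By (1)–(3) the coefficient matrix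
`((G_p)_{n-1,k})_{p,k}` is upper triangular with nonzero diagonal, hence invertible, so every
`E_{n-1,k}` is in the algebra. Taking adjoints gives `E_{k,n-1}`, and
`E_{j,k} = E_{j,n-1} E_{n-1,k}`.
-/

open MeasureTheory Filter
open scoped ENNReal

noncomputable section

/-- Generalized binomial coefficient `x(x-1)⋯(x-j+1)/j!`. -/
def gbinom (x : ℝ) (j : ℕ) : ℝ :=
  (∏ i ∈ Finset.range j, (x - i)) / (Nat.factorial j)

/-- Shifted Jacobi polynomial `Q_m^{(α,β)}` on `[0,1]`:
`Q_m^{(α,β)}(t) = Σ_{k=0}^m binom(α+β+m+k,k)·binom(β+m,m-k)·(-1)^{m-k}·t^k`. -/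
def jacQ (α β : ℝ) (m : ℕ) (t : ℝ) : ℝ :=
  ∑ k ∈ Finset.range (m + 1),
    gbinom (α + β + m + k) k * gbinom (β + m) (m - k) * (-1 : ℝ) ^ (m - k) * t ^ k

/-- Normalizing coefficient
`κ(α,β,m) = sqrt((2m+α+β+1)·Γ(m+α+β+1)·m!/(Γ(m+α+1)·Γ(m+β+1)))`. -/
def jacCoef (α β : ℝ) (m : ℕ) : ℝ :=
  Real.sqrt ((2 * m + α + β + 1) * Real.Gamma (m + α + β + 1) * (Nat.factorial m) /
    (Real.Gamma (m + α + 1) * Real.Gamma (m + β + 1)))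

/-- Jacobi function `J_m^{(α,β)}(t) = κ(α,β,m)·(1-t)^{α/2}·t^{β/2}·Q_m^{(α,β)}(t)`. -/
def jacJ (α β : ℝ) (m : ℕ) (t : ℝ) : ℝ :=
  jacCoef α β m * (1 - t) ^ (α / 2) * t ^ (β / 2) * jacQ α β m t

/-- `dd n ξ = min(n+ξ, n)` (for `ξ ≥ 1-n`), written as a total function into `ℕ`. -/
def dd (n : ℕ) (ξ : ℤ) : ℕ := n - (-ξ).toNat

lemma dd_le (n : ℕ) (ξ : ℤ) : dd n ξ ≤ n := Nat.sub_le _ _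

/-- The set `Ω_n = {ξ ∈ ℤ : ξ ≥ -n+1}` as a subtype. -/
abbrev Om (n : ℕ) : Type := {ξ : ℤ // 1 - (n : ℤ) ≤ ξ}

/-- The entry `γ(a)_{ξ,j,k} = κ(α,|ξ|,j)·κ(α,|ξ|,k)·
∫₀¹ a(√t)·Q_j^{(α,|ξ|)}(t)·Q_k^{(α,|ξ|)}(t)·(1-t)^α·t^{|ξ|} dt`. -/
def gammaEnt (α : ℝ) (a : ℝ → ℂ) (ξ : ℤ) (j k : ℕ) : ℂ :=
  ((jacCoef α ξ.natAbs j * jacCoef α ξ.natAbs k : ℝ) : ℂ) *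
    ∫ t in (0:ℝ)..1, a (Real.sqrt t) *
      ((jacQ α ξ.natAbs j t * jacQ α ξ.natAbs k t * (1 - t) ^ α * t ^ (ξ.natAbs) : ℝ) : ℂ)

/-- The matrix `γ(a)_ξ ∈ M_{d_ξ}(ℂ)`. -/
def gammaMat (n : ℕ) (α : ℝ) (a : ℝ → ℂ) (ξ : ℤ) :
    Matrix (Fin (dd n ξ)) (Fin (dd n ξ)) ℂ :=
  Matrix.of fun j k => gammaEnt α a ξ (j : ℕ) (k : ℕ)

/-- Bounded measurable functions on `[0,1)` having a finite limit at `1⁻`. -/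
def LinfLim (a : ℝ → ℂ) : Prop :=
  Measurable a ∧ (∃ C : ℝ, ∀ r ∈ Set.Ico (0:ℝ) 1, ‖a r‖ ≤ C) ∧
    ∃ ω : ℂ, Tendsto a (nhdsWithin 1 (Set.Ico (0:ℝ) 1)) (nhds ω)

/-- The generating symbol `g_p(t) = Q_p^{(α,0)}(t²)`, as a complex-valued function. -/
def gSym (α : ℝ) (p : ℕ) (t : ℝ) : ℂ := ((jacQ α 0 p (t ^ 2) : ℝ) : ℂ)

/-- `⟨A w, w⟩ = Σ_{j,k} conj(w_j)·A_{j,k}·w_k`. -/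
def innerForm {d : ℕ} (A : Matrix (Fin d) (Fin d) ℂ) (w : Fin d → ℂ) : ℂ :=
  ∑ j : Fin d, ∑ k : Fin d, (starRingEnd ℂ) (w j) * A j k * w k

open Matrix

theorem Submodule.mem_of_isUnit_det {R V ι : Type*} [CommRing R] [AddCommGroup V] [Module R V]
    [Fintype ι] [DecidableEq ι] (S : Submodule R V) (e : ι → V) (A : Matrix ι ι R)
    (hA : IsUnit A.det) (hmem : ∀ i, ∑ j, A i j • e j ∈ S) (i : ι) : e i ∈ S := by
  have : e i = ∑ k, A⁻¹ i k • ∑ j, A k j • e j := by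
    simp_rw [Finset.smul_sum, smul_smul]
    rw [Finset.sum_comm]
    simp_rw [← Finset.sum_smul, ← mul_apply, nonsing_inv_mul A hA, one_apply, ite_smul, one_smul,
      zero_smul, Finset.sum_ite_eq, Finset.mem_univ, if_true]
  rw [this]
  exact S.sum_mem fun k _ => S.smul_mem _ (hmem k)

theorem Matrix.single_one_mul_eq_sum {R ι : Type*} [Semiring R] [Fintype ι] [DecidableEq ι]
    (i j : ι) (M : Matrix ι ι R) : single i j 1 * M = ∑ k, M j k • single i k 1 := by
  ext a b
  by_cases h : a = i
  · subst h
    simp [sum_apply, single_apply]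
  · rw [single_mul_apply_of_ne _ _ _ _ _ h]
    simp [sum_apply, Ne.symm h]

theorem StarSubalgebra.eq_top_of_forall_single_row_mem {R ι : Type*} [CommSemiring R] [StarRing R]
    [Fintype ι] [DecidableEq ι] (S : StarSubalgebra R (Matrix ι ι R)) (i : ι)
    (h : ∀ j, single i j 1 ∈ S) : S = ⊤ := by
  have hall : ∀ j k, single j k (1 : R) ∈ S := fun j k => by
    have hcol : single j i (1 : R) ∈ S := by
      simpa [star_eq_conjTranspose, conjTranspose_single] using star_mem (h j)
    simpa using S.mul_mem hcol (h k)
  refine eq_top_iff.2 fun M => ?_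
  rw [matrix_eq_sum_single M]
  refine S.sum_mem fun j _ => S.sum_mem fun k _ => ?_
  simpa [smul_single] using S.smul_mem (hall j k) (M j k)

/-- generators with the prescribed last-row structure generate the full matrix
star-algebra `M_n(ℂ)`. -/
theorem statement8 (n : ℕ) (hn : 1 ≤ n) (G : Fin n → Matrix (Fin n) (Fin n) ℂ)
    (h1 : ∃ c : ℂ, c ≠ 0 ∧
      G ⟨n - 1, by omega⟩ = c • Matrix.single ⟨n - 1, by omega⟩ ⟨n - 1, by omega⟩ 1)
    (h2 : ∀ p : Fin n, (p : ℕ) < n - 1 → G p ⟨n - 1, by omega⟩ p ≠ 0)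
    (h3 : ∀ p : Fin n, 1 ≤ (p : ℕ) → (p : ℕ) < n - 1 →
      ∀ k : Fin n, (k : ℕ) < (p : ℕ) → G p ⟨n - 1, by omega⟩ k = 0) :
    StarAlgebra.adjoin ℂ (Set.range G) = ⊤ := by
  set N : Fin n := ⟨n - 1, by omega⟩
  obtain ⟨c, hc, hGN⟩ := h1
  set S := StarAlgebra.adjoin ℂ (Set.range G)
  have hG (p : Fin n) : G p ∈ S := StarAlgebra.subset_adjoin ℂ _ ⟨p, rfl⟩
  have hE : single N N 1 ∈ S := by
    rw [← inv_smul_smul₀ hc (single N N 1), ← hGN]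
    exact S.smul_mem (hG N) _
  have hN (p : Fin n) : (p : ℕ) < n - 1 ∨ p = N := by
    rcases (Nat.le_sub_one_of_lt p.isLt).lt_or_eq with h | h
    · exact .inl h
    · exact .inr (Fin.ext h)
  set A : Matrix (Fin n) (Fin n) ℂ := .of fun p k => G p N k
  have hA : A.IsUpperTriangular := by
    intro p k (hkp : k < p)
    rcases hN p with hp | rfl
    · exact h3 p (by omega) hp k hkp
    · simp [A, hGN, hkp.ne']
  have hdiag (p : Fin n) : A p p ≠ 0 := by
    rcases hN p with hp | rfl
    · exact h2 p hp
    · simpa [A, hGN] using hc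
  have hdet : IsUnit A.det := by
    rw [det_of_isUpperTriangular hA, isUnit_iff_ne_zero]
    exact Finset.prod_ne_zero_iff.2 fun p _ => hdiag p
  refine StarSubalgebra.eq_top_of_forall_single_row_mem S N fun k => ?_
  refine S.toSubalgebra.toSubmodule.mem_of_isUnit_det (fun k => single N k 1) A hdet (fun p => ?_) k
  change ∑ k, G p N k • single N k 1 ∈ S
  rw [← single_one_mul_eq_sum]
  exact S.mul_mem hE (hG p)
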